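/- arXiv:1412.0129 — 6 statements merged into one kernel-verified Lean document; each statement's English description precedes it below -/
import Mathlib

section
/- For nonnegative integers n, m with m ≤ n and real b, the identity Σ_{i=0}^{m} C(n,i) b^{m-i} = Σ_{i=0}^{m} C(n-1-i, m-i) (1+b)^i holds. -/
/-- Alternative representation of s(n,m). -/
theorem stmt_1 (n m : ℕ) (b : ℝ) (h : m ≤ n) :
    ∑ i ∈ Finset.range (m + 1), (n.choose i : ℝ) * b ^ (m - i)
      = ∑ i ∈ Finset.range (m + 1), ((n - 1 - i).choose (m - i) : ℝ) * (1 + b) ^ i := by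
  induction n generalizing m b with
  | zero =>
    interval_cases m
    simp
  | succ n ih =>
    match m with
    | 0 => simp
    | (m+1) =>
      rcases eq_or_lt_of_le h with heq | hlt
      · -- m = n : both sides equal (1+b)^(m+1)
        have hm : m = n := by omega
        subst hm
        have hL : ∑ i ∈ Finset.range (m + 1 + 1), (((m+1).choose i : ℝ)) * b ^ (m + 1 - i)
            = (1 + b) ^ (m + 1) := by
          rw [add_pow]
          refine Finset.sum_congr rfl fun i hi => ?_
          rw [Finset.mem_range] at hi
          rw [one_pow]
          ring
        rw [hL, Finset.sum_eq_single (m+1)]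
        · simp
        · intro i hi hne
          rw [Finset.mem_range] at hi
          have hz : (m - i).choose (m + 1 - i) = 0 :=
            Nat.choose_eq_zero_of_lt (by omega)
          have he : m + 1 - 1 - i = m - i := by omega
          rw [he, hz, Nat.cast_zero, zero_mul]
        · intro hmem; simp at hmem
      · -- m + 1 ≤ n
        have h1 : m + 1 ≤ n := by omega
        have h0 : m ≤ n := by omega
        calc ∑ i ∈ Finset.range (m + 1 + 1), ((n+1).choose i : ℝ) * b ^ (m + 1 - i)
            = (∑ i ∈ Finset.range (m + 1), (n.choose i : ℝ) * b ^ (m - i))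
              + ∑ i ∈ Finset.range (m + 1 + 1), (n.choose i : ℝ) * b ^ (m + 1 - i) := by
              rw [Finset.sum_range_succ' (fun i => ((n+1).choose i : ℝ) * b ^ (m + 1 - i)) (m+1),
                Finset.sum_range_succ' (fun i => ((n).choose i : ℝ) * b ^ (m + 1 - i)) (m+1)]
              simp only [Nat.choose_succ_succ, Nat.succ_sub_succ, Nat.choose_zero_right,
                Nat.sub_zero, Nat.cast_add, add_mul, Finset.sum_add_distrib]
              push_cast
              ring
          _ = (∑ i ∈ Finset.range (m + 1), ((n - 1 - i).choose (m - i) : ℝ) * (1 + b) ^ i)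
              + ∑ i ∈ Finset.range (m + 1 + 1), ((n - 1 - i).choose (m + 1 - i) : ℝ) * (1 + b) ^ i := by
              rw [ih m b h0, ih (m+1) b h1]
          _ = ∑ i ∈ Finset.range (m + 1 + 1), ((n + 1 - 1 - i).choose (m + 1 - i) : ℝ) * (1 + b) ^ i := by
              rw [Finset.sum_range_succ (fun i => ((n - 1 - i).choose (m + 1 - i) : ℝ) * (1 + b) ^ i),
                Finset.sum_range_succ (fun i => ((n + 1 - 1 - i).choose (m + 1 - i) : ℝ) * (1 + b) ^ i)]
              have e1 : (n - 1 - (m+1)).choose (m + 1 - (m+1)) = 1 := by simp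
              have e2 : (n + 1 - 1 - (m+1)).choose (m + 1 - (m+1)) = 1 := by simp
              rw [e1, e2, ← add_assoc]
              congr 1
              rw [← Finset.sum_add_distrib]
              refine Finset.sum_congr rfl fun i hi => ?_
              rw [Finset.mem_range] at hi
              have hn : n + 1 - 1 - i = (n - 1 - i) + 1 := by omega
              have hm' : m + 1 - i = (m - i) + 1 := by omega
              rw [hn, hm', Nat.choose_succ_succ]
              push_cast
              ring
end

section
/- For nonnegative integers n, m with m ≤ n and real b > -1, the quantity s(n,m) = Σ_{i=0}^{m} C(n,i) b^{m-i} is strictly positive. -/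
/-- Positivity of s(n,m) for b > -1. -/
theorem stmt_2 (n m : ℕ) (b : ℝ) (hb : -1 < b) (h : m ≤ n) :
    0 < ∑ i ∈ Finset.range (m + 1), (n.choose i : ℝ) * b ^ (m - i) := by
  induction n generalizing m with
  | zero =>
    interval_cases m
    simp
  | succ n ih =>
    match m with
    | 0 => simp
    | k+1 =>
      rcases Nat.lt_or_ge k n with hm | hm
      · have hrec : ∑ i ∈ Finset.range (k+1+1), ((n+1).choose i : ℝ) * b ^ (k+1-i)
            = (∑ i ∈ Finset.range (k+1+1), (n.choose i : ℝ) * b ^ (k+1-i))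
              + ∑ i ∈ Finset.range (k+1), (n.choose i : ℝ) * b ^ (k-i) := by
          rw [Finset.sum_range_succ' (fun i => ((n+1).choose i : ℝ) * b ^ (k+1-i)) (k+1),
              Finset.sum_range_succ' (fun i => (n.choose i : ℝ) * b ^ (k+1-i)) (k+1)]
          simp only [Nat.choose_succ_succ, Nat.cast_add, add_mul, Finset.sum_add_distrib,
            Nat.succ_sub_succ_eq_sub, Nat.choose_zero_right, Nat.cast_one, one_mul,
            Nat.sub_zero]
          ring
        rw [hrec]
        exact add_pos (ih (k+1) (by omega)) (ih k (by omega))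
      · have hm' : k + 1 = n + 1 := by omega
        have : ∑ i ∈ Finset.range (k+1+1), ((n+1).choose i : ℝ) * b ^ (k+1-i)
            = (1 + b) ^ (k+1) := by
          rw [add_pow]
          apply Finset.sum_congr rfl
          intro i hi
          rw [hm']
          ring
        rw [this]
        exact pow_pos (by linarith) _
end

section
/- For integers n, m with 0 < m < n and real b > -1, the strict inequality s(n-1,m)/s(n-1,m-1) > (n-1-m)/m holds, where s(n,m) = Σ_{i=0}^{m} C(n,i) b^{m-i}. -/
noncomputable def s (b : ℝ) (n m : ℕ) : ℝ :=
  ∑ i ∈ Finset.range (m + 1), (n.choose i : ℝ) * b ^ (m - i)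

lemma s_zero (b : ℝ) (n : ℕ) : s b n 0 = 1 := by simp [s]

lemma s_one (b : ℝ) (n : ℕ) : s b n 1 = b + n := by
  simp [s, Finset.sum_range_succ]

lemma s_diag (b : ℝ) (n : ℕ) : s b n n = (1 + b) ^ n := by
  rw [add_pow]
  unfold s
  refine Finset.sum_congr rfl fun i hi => ?_
  simp; ring

lemma s_pascal (b : ℝ) (n m : ℕ) :
    s b (n+1) (m+1) = s b n (m+1) + s b n m := by
  unfold s
  rw [Finset.sum_range_succ' (fun i => ((n+1).choose i : ℝ) * b ^ (m+1-i)) (m+1),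
      Finset.sum_range_succ' (fun i => (n.choose i : ℝ) * b ^ (m+1-i)) (m+1)]
  simp only [Nat.choose_succ_succ, Nat.succ_sub_succ, Nat.choose_zero_right,
    Nat.cast_one, one_mul, Nat.sub_zero, Nat.cast_add]
  rw [add_right_comm, ← Finset.sum_add_distrib]
  congr 1
  refine Finset.sum_congr rfl fun i hi => ?_
  ring

lemma s_pos (b : ℝ) (hb : -1 < b) : ∀ n m, m ≤ n → 0 < s b n m := by
  have h1b : (0:ℝ) < 1 + b := by linarith
  intro n
  induction n with
  | zero =>
    intro m hm
    interval_cases m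
    simp [s_zero]
  | succ n ih =>
    intro m hm
    match m with
    | 0 => simp [s_zero]
    | Nat.succ m =>
      show 0 < s b (n+1) (m+1)
      rcases Nat.lt_or_ge (m+1) (n+1) with h | h
      · rw [s_pascal]
        exact add_pos (ih (m+1) (by omega)) (ih m (by omega))
      · have hmn : m + 1 = n + 1 := le_antisymm hm h
        rw [hmn, s_diag]
        positivity

lemma D_pos (b : ℝ) (hb : -1 < b) : ∀ N m : ℕ, 1 ≤ m → m ≤ N →
    0 < (m : ℝ) * s b N m - ((N : ℝ) - m) * s b N (m - 1) := by
  intro N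
  induction N with
  | zero => intro m h1 h2; omega
  | succ N ih =>
    intro m h1 h2
    match m, h1 with
    | 1, _ =>
      simp only [Nat.sub_self, s_one, s_zero, Nat.cast_one, one_mul, mul_one]
      push_cast
      linarith
    | Nat.succ (Nat.succ m), _ =>
      show 0 < ((m+2 : ℕ) : ℝ) * s b (N+1) (m+2) - (((N+1:ℕ) : ℝ) - ((m+2:ℕ):ℝ)) * s b (N+1) (m+2-1)
      rcases Nat.lt_or_ge (m+2) (N+1) with h | h
      · have hA := ih (m+2) (by omega) (by omega)
        have hB := ih (m+1) (by omega) (by omega)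
        have h21 : m + 2 - 1 = m + 1 := rfl
        rw [h21] at hA ⊢
        have e1 : s b (N+1) (m+2) = s b N (m+2) + s b N (m+1) := s_pascal b N (m+1)
        have e2 : s b (N+1) (m+1) = s b N (m+1) + s b N m := s_pascal b N m
        rw [e1, e2]
        push_cast at hA hB ⊢
        nlinarith [hA, hB]
      · have hmn : m + 2 = N + 1 := le_antisymm h2 h
        have h1b : (0:ℝ) < 1 + b := by linarith
        rw [hmn, s_diag]
        have hc : ((N:ℝ) + 1 - (N + 1 : ℕ)) = 0 := by push_cast; ring
        rw [← hmn] at hc ⊢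
        push_cast at hc ⊢
        rw [hmn]
        nlinarith [pow_pos h1b (N+1), hc]

/-- s(n-1,m)/s(n-1,m-1) > (n-1-m)/m for 0 < m < n and b > -1. -/
theorem stmt_8 (n m : ℕ) (b : ℝ) (hb : -1 < b) (h1 : 0 < m) (h2 : m < n) :
    ((n : ℝ) - 1 - m) / m < s b (n - 1) m / s b (n - 1) (m - 1) := by
  have hposd : 0 < s b (n-1) (m-1) := s_pos b hb (n-1) (m-1) (by omega)
  have hm0 : (0:ℝ) < m := by exact_mod_cast h1
  rw [div_lt_div_iff₀ hm0 hposd]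
  have hD := D_pos b hb (n-1) m h1 (by omega)
  have hc : ((n-1 : ℕ) : ℝ) = (n:ℝ) - 1 := by
    have : 1 ≤ n := by omega
    push_cast [this]; ring
  rw [hc] at hD
  linarith
end

section
/- For integers n > m > 0, k > 0, real b > -1, and nonnegative reals r_1,…,r_k, the identity t(n,m,k) = s(n-1,m-1)·(-b·r_k) + t(n-1,m,k-1) + s(n-1,m)·r_k holds, where t(n,m,k) = Σ_{i=1}^{k} r_{k+1-i} C(n-i,m), t(n-1,m,k-1) = Σ_{i=1}^{k-1} r_{k-i} C(n-1-i,m), and s(n,m) = Σ_{i=0}^{m} C(n,i) b^{m-i}. -/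
noncomputable def binom (a : ℤ) (c : ℕ) : ℝ :=
  if 0 ≤ a then (a.toNat.choose c : ℝ) else 0

noncomputable def t (r : ℕ → ℝ) (n m k : ℕ) : ℝ :=
  ∑ i ∈ Finset.Icc 1 k, r (k + 1 - i) * binom ((n : ℤ) - i) m

lemma s_step (b : ℝ) (N m : ℕ) (hm : 0 < m) :
    s b N m = b * s b N (m - 1) + (N.choose m : ℝ) := by
  obtain ⟨m, rfl⟩ : ∃ m', m = m' + 1 := ⟨m - 1, (Nat.succ_pred_eq_of_pos hm).symm⟩
  simp only [s, Nat.add_sub_cancel]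
  rw [Finset.sum_range_succ, Finset.mul_sum]
  congr 1
  · apply Finset.sum_congr rfl
    intro i hi
    rw [Finset.mem_range] at hi
    have : m + 1 - i = (m - i) + 1 := by omega
    rw [this, pow_succ]
    ring
  · simp

lemma sum_Icc_to_range (k : ℕ) (f : ℕ → ℝ) :
    ∑ i ∈ Finset.Icc 1 k, f i = ∑ j ∈ Finset.range k, f (j + 1) := by
  induction k with
  | zero => simp
  | succ k ih =>
    rw [Finset.sum_Icc_succ_top (by omega), ih, Finset.sum_range_succ]

/-- The identity verifying the violation-column indifference equation. -/
theorem stmt_10 (n m k : ℕ) (b : ℝ) (r : ℕ → ℝ)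
    (hb : -1 < b) (hm : 0 < m) (hmn : m < n) (hk : 0 < k)
    (hr : ∀ i, 0 ≤ r i) :
    t r n m k = s b (n - 1) (m - 1) * (-b * r k)
      + t r (n - 1) m (k - 1) + s b (n - 1) m * r k := by
  have hn2 : 2 ≤ n := by omega
  obtain ⟨k, rfl⟩ : ∃ k', k = k' + 1 := ⟨k - 1, (Nat.succ_pred_eq_of_pos hk).symm⟩
  simp only [t, Nat.add_sub_cancel]
  rw [sum_Icc_to_range, sum_Icc_to_range, Finset.sum_range_succ']
  push_cast
  have h1 : ∀ x ∈ Finset.range k,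
      r (k - x) * binom ((n : ℤ) - ((x:ℤ) + 1 + 1)) m
        = r (k - x) * binom (((n - 1 : ℕ) : ℤ) - ((x:ℤ) + 1)) m := by
    intro x _
    have h3 : ((n : ℤ) - ((x:ℤ) + 1 + 1)) = (((n - 1 : ℕ) : ℤ) - ((x:ℤ) + 1)) := by
      push_cast [Nat.cast_sub (by omega : 1 ≤ n)]; ring
    rw [h3]
  rw [Finset.sum_congr rfl h1]
  have hb1 : binom ((n : ℤ) - 1) m = ((n - 1).choose m : ℝ) := by
    have hpos : (0:ℤ) ≤ (n : ℤ) - 1 := by omega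
    rw [binom, if_pos hpos]
    congr 2
    omega
  rw [hb1, s_step b (n - 1) m hm]
  ring
end

section
/- For integers n > m ≥ 0 and real x > 0, define S(n,m,x) = Σ_{i=0}^{m} C(n,i)(x-1)^{m-i}, which equals Σ_{i=0}^{m} C(n-1-i,m-i) x^i. Then S(n,m,x)² > C(n,m+1) · (d/dx) S(n,m,x), i.e. (Σ_{i=0}^{m} C(n-1-i,m-i) x^i)² > C(n,m+1) · Σ_{i=1}^{m} i·C(n-1-i,m-i) x^{i-1} for all x > 0. -/
open Finset

private lemma ratio_aux (x d : ℕ) :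
    (x + 1) * (x + 1 + d).choose d = (x + 1 + d) * (x + d).choose d := by
  have hs : (x + d).choose x = (x + d).choose d := by
    have h := Nat.choose_symm (show d ≤ x + d by omega)
    rwa [Nat.add_sub_cancel] at h
  have hs2 : (x + d + 1).choose (x + 1) = (x + 1 + d).choose d := by
    have h := Nat.choose_symm (show d ≤ x + 1 + d by omega)
    rw [Nat.add_sub_cancel] at h
    rw [show x + d + 1 = x + 1 + d by ring]
    exact h
  have h := Nat.add_one_mul_choose_eq (x + d) x
  rw [hs, hs2] at h
  calc (x + 1) * (x + 1 + d).choose d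
      = (x + 1 + d).choose d * (x + 1) := mul_comm _ _
    _ = (x + d + 1) * (x + d).choose d := h.symm
    _ = (x + 1 + d) * (x + d).choose d := by ring_nf

private lemma one_step (x y d : ℕ) (h : x ≤ y) :
    (x + d).choose d * (y + 1 + d).choose d ≤ (x + 1 + d).choose d * (y + d).choose d := by
  have h1 := ratio_aux x d
  have h2 := ratio_aux y d
  have hpos : 0 < (x + 1) * (y + 1) := by positivity
  refine Nat.le_of_mul_le_mul_left ?_ hpos
  calc (x + 1) * (y + 1) * ((x + d).choose d * (y + 1 + d).choose d)
      = (x + 1) * (x + d).choose d * ((y + 1) * (y + 1 + d).choose d) := by ring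
    _ = (x + 1) * (x + d).choose d * ((y + 1 + d) * (y + d).choose d) := by rw [h2]
    _ = ((x + 1) * (y + 1 + d)) * ((x + d).choose d * (y + d).choose d) := by ring
    _ ≤ ((x + 1 + d) * (y + 1)) * ((x + d).choose d * (y + d).choose d) := by
        apply Nat.mul_le_mul_right
        nlinarith
    _ = (y + 1) * ((x + 1 + d) * (x + d).choose d) * (y + d).choose d := by ring
    _ = (y + 1) * ((x + 1) * (x + 1 + d).choose d) * (y + d).choose d := by rw [h1]
    _ = (x + 1) * (y + 1) * ((x + 1 + d).choose d * (y + d).choose d) := by ring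

private lemma moves (t x y d : ℕ) (h : x + t ≤ y) :
    (x + d).choose d * (y + t + d).choose d ≤ (x + t + d).choose d * (y + d).choose d := by
  induction t generalizing x with
  | zero => simp
  | succ t ih =>
    calc (x + d).choose d * (y + (t + 1) + d).choose d
        = (x + d).choose d * (y + t + 1 + d).choose d := by ring_nf
      _ ≤ (x + 1 + d).choose d * (y + t + d).choose d := one_step x (y + t) d (by omega)
      _ ≤ (x + 1 + t + d).choose d * (y + d).choose d := ih (x + 1) (by omega)
      _ = (x + (t + 1) + d).choose d * (y + d).choose d := by ring_nf

private lemma key_d (j l e d : ℕ) (h : l ≤ j) :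
    (j + l + e + d + 2).choose d * (e + d).choose d ≤
      (l + e + d + 1).choose d * (j + e + d + 1).choose d := by
  have h2 := moves (l + 1) e (j + e + 1) d (by omega)
  rw [show j + e + 1 + (l + 1) + d = j + l + e + d + 2 by ring,
      show e + (l + 1) + d = l + e + d + 1 by ring,
      show j + e + 1 + d = j + e + d + 1 by ring] at h2
  rw [mul_comm]
  exact h2

private lemma key (j l e d : ℕ) :
    (j + l + e + d + 2).choose (j + l + e + 2) * (e + d).choose e ≤
      (l + e + d + 1).choose (l + e + 1) * (j + e + d + 1).choose (j + e + 1) := by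
  have csymm : ∀ a b : ℕ, (a + b).choose a = (a + b).choose b := by
    intro a b
    have h := Nat.choose_symm (show b ≤ a + b by omega)
    rwa [Nat.add_sub_cancel] at h
  have c1 : (j + l + e + d + 2).choose (j + l + e + 2) = (j + l + e + d + 2).choose d := by
    have := csymm (j + l + e + 2) d
    rwa [show j + l + e + 2 + d = j + l + e + d + 2 by ring] at this
  have c2 : (e + d).choose e = (e + d).choose d := csymm e d
  have c3 : ∀ a : ℕ, (a + e + d + 1).choose (a + e + 1) = (a + e + d + 1).choose d := by
    intro a
    have := csymm (a + e + 1) d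
    rwa [show a + e + 1 + d = a + e + d + 1 by ring] at this
  rw [c1, c2, c3, c3]
  rcases le_total l j with hlj | hjl
  · exact key_d j l e d hlj
  · calc (j + l + e + d + 2).choose d * (e + d).choose d
        = (l + j + e + d + 2).choose d * (e + d).choose d := by
          rw [show j + l + e + d + 2 = l + j + e + d + 2 by ring]
      _ ≤ (j + e + d + 1).choose d * (l + e + d + 1).choose d := key_d l j e d hjl
      _ = (l + e + d + 1).choose d * (j + e + d + 1).choose d := mul_comm _ _

private lemma key' (n m p q : ℕ) (hpq : p + q + 1 ≤ m) (hmn : m < n) :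
    n.choose (m + 1) * (n - 1 - (p + q + 1)).choose (m - (p + q + 1)) ≤
      (n - 1 - p).choose (m - p) * (n - 1 - q).choose (m - q) := by
  have h := key p q (m - (p + q + 1)) (n - 1 - m)
  have e1 : p + q + (m - (p + q + 1)) + (n - 1 - m) + 2 = n := by omega
  have e2 : p + q + (m - (p + q + 1)) + 2 = m + 1 := by omega
  have e3 : (m - (p + q + 1)) + (n - 1 - m) = n - 1 - (p + q + 1) := by omega
  have e4 : q + (m - (p + q + 1)) + (n - 1 - m) + 1 = n - 1 - p := by omega
  have e5 : q + (m - (p + q + 1)) + 1 = m - p := by omega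
  have e6 : p + (m - (p + q + 1)) + (n - 1 - m) + 1 = n - 1 - q := by omega
  have e7 : p + (m - (p + q + 1)) + 1 = m - q := by omega
  rw [e1, e2, e3, e4, e5, e6, e7] at h
  exact h

/-- The polynomial inequality S(n,m,x)² > C(n,m+1)·S'(n,m,x) for x > 0,
using the representation S(n,m,x) = Σ_{i=0}^{m} C(n-1-i,m-i) x^i. -/
theorem stmt_17 (n m : ℕ) (x : ℝ) (hmn : m < n) (hx : 0 < x) :
    (n.choose (m + 1) : ℝ) *
      (∑ i ∈ Finset.Icc 1 m, (i : ℝ) * ((n - 1 - i).choose (m - i) : ℝ) * x ^ (i - 1))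
    < (∑ i ∈ Finset.range (m + 1), ((n - 1 - i).choose (m - i) : ℝ) * x ^ i) ^ 2 := by
  set A : ℕ → ℝ := fun i => ((n - 1 - i).choose (m - i) : ℝ) with hA
  set F : ℕ × ℕ → ℝ := fun pq => (A pq.1 * x ^ pq.1) * (A pq.2 * x ^ pq.2) with hF
  have hAnn : ∀ i, 0 ≤ A i := fun i => Nat.cast_nonneg _
  -- Step 1: rewrite LHS sum over range m
  have step1 : (∑ i ∈ Finset.Icc 1 m, (i : ℝ) * A i * x ^ (i - 1))
      = ∑ s ∈ Finset.range m, ((s : ℝ) + 1) * A (s + 1) * x ^ s := by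
    rw [← Finset.Ico_add_one_right_eq_Icc, Finset.sum_Ico_eq_sum_range]
    simp only [show m + 1 - 1 = m from rfl]
    apply Finset.sum_congr rfl
    intro s _
    rw [show 1 + s - 1 = s by omega, show 1 + s = s + 1 by ring]
    push_cast
    ring
  -- Step 2: per-s bound
  have step2 : ∀ s ∈ Finset.range m,
      (n.choose (m + 1) : ℝ) * (((s : ℝ) + 1) * A (s + 1) * x ^ s)
        ≤ ∑ p ∈ Finset.range (s + 1), F (p, s - p) := by
    intro s hs
    rw [Finset.mem_range] at hs
    have hconst : (n.choose (m + 1) : ℝ) * (((s : ℝ) + 1) * A (s + 1) * x ^ s)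
        = ∑ _p ∈ Finset.range (s + 1), (n.choose (m + 1) : ℝ) * A (s + 1) * x ^ s := by
      rw [Finset.sum_const, Finset.card_range, nsmul_eq_mul]
      push_cast
      ring
    rw [hconst]
    apply Finset.sum_le_sum
    intro p hp
    rw [Finset.mem_range] at hp
    have hkey : (n.choose (m + 1) : ℝ) * A (s + 1) ≤ A p * A (s - p) := by
      simp only [hA]
      have h := key' n m p (s - p) (by omega) hmn
      rw [show p + (s - p) + 1 = s + 1 by omega] at h
      exact_mod_cast h
    have hxpow : x ^ s = x ^ p * x ^ (s - p) := by
      rw [← pow_add]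
      congr 1
      omega
    calc (n.choose (m + 1) : ℝ) * A (s + 1) * x ^ s
        ≤ (A p * A (s - p)) * x ^ s :=
          mul_le_mul_of_nonneg_right hkey (by positivity)
      _ = F (p, s - p) := by simp only [hF, hxpow]; ring
  -- Step 3: sum the bound
  have step3 : (n.choose (m + 1) : ℝ) * (∑ s ∈ Finset.range m, ((s : ℝ) + 1) * A (s + 1) * x ^ s)
      ≤ ∑ s ∈ Finset.range m, ∑ p ∈ Finset.range (s + 1), F (p, s - p) := by
    rw [Finset.mul_sum]
    exact Finset.sum_le_sum step2
  -- Step 4: double sum as sum over a finset of pairs T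
  set T : Finset (ℕ × ℕ) :=
    ((Finset.range m).sigma (fun s => Finset.range (s + 1))).image
      (fun sp => (sp.2, sp.1 - sp.2)) with hT
  have step4 : ∑ s ∈ Finset.range m, ∑ p ∈ Finset.range (s + 1), F (p, s - p)
      = ∑ pq ∈ T, F pq := by
    rw [hT, Finset.sum_image]
    · exact (Finset.sum_sigma (Finset.range m) (fun s => Finset.range (s + 1))
        (fun sp => F (sp.2, sp.1 - sp.2))).symm
    · intro a ha b hb hab
      simp only [Finset.mem_coe, Finset.mem_sigma, Finset.mem_range] at ha hb
      have h1 : a.2 = b.2 := congrArg Prod.fst hab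
      have h2 : a.1 - a.2 = b.1 - b.2 := congrArg Prod.snd hab
      have h3 : a.1 = b.1 := by omega
      exact Sigma.ext h3 (heq_of_eq h1)
  -- Step 5: strict inequality by extending to the full square
  have hsub : T ⊆ (Finset.range (m + 1)) ×ˢ (Finset.range (m + 1)) := by
    intro pq hpq
    rw [hT, Finset.mem_image] at hpq
    obtain ⟨sp, hsp, heq⟩ := hpq
    simp only [Finset.mem_sigma, Finset.mem_range] at hsp
    rw [Finset.mem_product, ← heq]
    refine ⟨?_, ?_⟩ <;> simp <;> omega
  have hmmT : (m, m) ∉ T := by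
    rw [hT, Finset.mem_image]
    rintro ⟨sp, hsp, heq⟩
    simp only [Finset.mem_sigma, Finset.mem_range] at hsp
    have h1 : sp.2 = m := congrArg Prod.fst heq
    have h2 : sp.1 - sp.2 = m := congrArg Prod.snd heq
    omega
  have hAm : A m = 1 := by
    simp only [hA]
    simp
  have step5 : ∑ pq ∈ T, F pq < ∑ pq ∈ (Finset.range (m + 1)) ×ˢ (Finset.range (m + 1)), F pq := by
    apply Finset.sum_lt_sum_of_subset hsub (i := (m, m))
    · simp [Finset.mem_product]
    · exact hmmT
    · simp only [hF, hAm]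
      positivity
    · intro j _ _
      simp only [hF]
      have h1 := hAnn j.1
      have h2 := hAnn j.2
      positivity
  -- Step 6: the square sum is the squared sum
  have step6 : ∑ pq ∈ (Finset.range (m + 1)) ×ˢ (Finset.range (m + 1)), F pq
      = (∑ i ∈ Finset.range (m + 1), A i * x ^ i) ^ 2 := by
    rw [sq, Finset.sum_mul_sum, Finset.sum_product]
  calc (n.choose (m + 1) : ℝ) * (∑ i ∈ Finset.Icc 1 m, (i : ℝ) * A i * x ^ (i - 1))
      = (n.choose (m + 1) : ℝ) * (∑ s ∈ Finset.range m, ((s : ℝ) + 1) * A (s + 1) * x ^ s) := by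
        rw [step1]
    _ ≤ ∑ s ∈ Finset.range m, ∑ p ∈ Finset.range (s + 1), F (p, s - p) := step3
    _ = ∑ pq ∈ T, F pq := step4
    _ < ∑ pq ∈ (Finset.range (m + 1)) ×ˢ (Finset.range (m + 1)), F pq := step5
    _ = (∑ i ∈ Finset.range (m + 1), A i * x ^ i) ^ 2 := step6
end

section
/- For nonnegative integers n > m ≥ 0, 0 ≤ i ≤ m-1, and 0 ≤ k ≤ i, the binomial inequality C(n-1-k, m-k) · C(n-1-i+k, m-i+k) ≥ C(n, m+1) · C(n-2-i, m-1-i) holds. -/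
/-!
Put `d = n - 1 - m`. Every binomial coefficient in the inequality has the form
`g t = C(t + d, t)`, and the inequality reads `g a * g b ≤ g x * g y` with `x + y = a + b` and
`a ≤ x, y ≤ b`. Since `g (t + 1) / g t = (t + d + 1) / (t + 1)` decreases in `t`, the sequence `g`
is log-concave, so moving the outer pair `a, b` inwards one step at a time increases the product.
-/

theorem mul_outer_le_mul_inner {R : Type*} [CommMagma R] [Preorder R] {f : ℕ → R}
    (hf : ∀ a e, f a * f (a + 1 + e) ≤ f (a + 1) * f (a + e)) (a d e : ℕ) :
    f a * f (a + d + e) ≤ f (a + d) * f (a + e) := by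
  induction d generalizing a e with
  | zero => simp only [Nat.add_zero, le_refl]
  | succ d ih =>
    cases e with
    | zero => simp only [Nat.add_zero, mul_comm, le_refl]
    | succ e =>
      calc f a * f (a + (d + 1) + (e + 1))
          = f a * f (a + 1 + (d + 1 + e)) := by congr 2; omega
        _ ≤ f (a + 1) * f (a + (d + 1 + e)) := hf a _
        _ = f (a + 1) * f (a + 1 + d + e) := by congr 2; omega
        _ ≤ f (a + 1 + d) * f (a + 1 + e) := ih (a + 1) e
        _ = f (a + (d + 1)) * f (a + (e + 1)) := by congr 2 <;> omega

theorem Nat.choose_add_self_mul_le (d a e : ℕ) :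
    (a + d).choose a * (a + 1 + e + d).choose (a + 1 + e)
      ≤ (a + 1 + d).choose (a + 1) * (a + e + d).choose (a + e) := by
  have ratio (t : ℕ) : (t + 1) * (t + 1 + d).choose (t + 1) = (t + d + 1) * (t + d).choose t := by
    rw [Nat.add_one_mul_choose_eq (t + d) t, show t + 1 + d = t + d + 1 by omega, mul_comm]
  have hb := ratio a
  have hy := ratio (a + e)
  rw [show a + e + 1 = a + 1 + e by omega] at hy
  have coeff_le : (a + 1) * (a + e + d + 1) ≤ (a + d + 1) * (a + 1 + e) := by nlinarith
  refine Nat.le_of_mul_le_mul_left ?_ (by positivity : 0 < (a + 1) * (a + 1 + e))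
  calc (a + 1) * (a + 1 + e) * ((a + d).choose a * (a + 1 + e + d).choose (a + 1 + e))
      = (a + 1) * (a + e + d + 1) * ((a + d).choose a * (a + e + d).choose (a + e)) := by
        linear_combination (a + 1) * (a + d).choose a * hy
    _ ≤ (a + d + 1) * (a + 1 + e) * ((a + d).choose a * (a + e + d).choose (a + e)) :=
        Nat.mul_le_mul_right _ coeff_le
    _ = (a + 1) * (a + 1 + e) * ((a + 1 + d).choose (a + 1) * (a + e + d).choose (a + e)) := by
        linear_combination (a + 1 + e) * (a + e + d).choose (a + e) * hb.symm

/-- The coefficient-wise binomial inequality underlying S(n,m,x)² ≥ C(n,m+1)·S'. -/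
theorem stmt_18 (n m i k : ℕ) (hmn : m < n) (hi : i + 1 ≤ m) (hk : k ≤ i) :
    n.choose (m + 1) * (n - 2 - i).choose (m - 1 - i)
      ≤ (n - 1 - k).choose (m - k) * (n - 1 - i + k).choose (m - i + k) := by
  obtain ⟨d, rfl⟩ := Nat.exists_eq_add_of_lt hmn
  obtain ⟨p, rfl⟩ := Nat.exists_eq_add_of_le hi
  obtain ⟨q, rfl⟩ := Nat.exists_eq_add_of_le hk
  have h := mul_outer_le_mul_inner (f := fun t ↦ (t + d).choose t)
    (Nat.choose_add_self_mul_le d) p (q + 1) (k + 1)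
  rw [mul_comm]
  convert h using 3 <;> first | rfl | omega
end
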